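/- Let α be a hinge angle with primary generating triple (p,q,k) and primary source point z₀ = p + qi. Then the set S_α of all Gaussian integers z such that e^{iα}·z has a half-integer coordinate equals the union over Q ∈ {0,1,2,3} of the rays { (2l+1)·i^Q·z₀ : l ∈ ℕ }. -/
import Mathlib


open Real Complex

/-- x is a half-integer -/
def IsHalf (x : ℝ) : Prop := ∃ n : ℤ, x = (n : ℝ) + 1 / 2

/-- z has a half-integer real or imaginary part (z ∈ ℋ) -/
def InH (z : ℂ) : Prop := IsHalf z.re ∨ IsHalf z.im

lemma isHalf_neg {x : ℝ} (h : IsHalf x) : IsHalf (-x) := by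
  obtain ⟨n, hn⟩ := h
  exact ⟨-n - 1, by rw [hn]; push_cast; ring⟩

lemma isHalf_odd {x : ℝ} (l : ℕ) (h : IsHalf x) : IsHalf ((2 * l + 1) * x) := by
  obtain ⟨n, hn⟩ := h
  exact ⟨(2 * l + 1) * n + l, by rw [hn]; push_cast; ring⟩

lemma inH_I {u : ℂ} (h : InH u) : InH (Complex.I * u) := by
  rcases h with h | h
  · right
    simpa [Complex.mul_im] using h
  · left
    simp only [Complex.mul_re, Complex.I_re, Complex.I_im, zero_mul, one_mul, zero_sub]
    exact isHalf_neg h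

lemma inH_Ipow {u : ℂ} (Q : ℕ) (h : InH u) : InH (Complex.I ^ Q * u) := by
  induction Q with
  | zero => simpa using h
  | succ n ih =>
    have : Complex.I ^ (n + 1) * u = Complex.I * (Complex.I ^ n * u) := by ring
    rw [this]
    exact inH_I ih

lemma inH_odd {u : ℂ} (l : ℕ) (h : InH u) : InH ((2 * (l : ℂ) + 1) * u) := by
  have h2 : (2 * (l : ℂ) + 1) = ((2 * (l : ℝ) + 1 : ℝ) : ℂ) := by push_cast; ring
  rcases h with h | h
  · left
    rw [h2, Complex.re_ofReal_mul]
    exact isHalf_odd l h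
  · right
    rw [h2, Complex.im_ofReal_mul]
    exact isHalf_odd l h

lemma inH_iff (α : ℝ) (a b : ℤ) :
    InH (Complex.exp (α * Complex.I) * ((a : ℂ) + (b : ℂ) * Complex.I)) ↔
      (IsHalf (Real.cos α * a - Real.sin α * b) ∨ IsHalf (Real.sin α * a + Real.cos α * b)) := by
  unfold InH
  have hre : (Complex.exp (α * Complex.I) * ((a : ℂ) + (b : ℂ) * Complex.I)).re
      = Real.cos α * a - Real.sin α * b := by
    simp [Complex.mul_re, Complex.exp_ofReal_mul_I_re, Complex.exp_ofReal_mul_I_im]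
  have him : (Complex.exp (α * Complex.I) * ((a : ℂ) + (b : ℂ) * Complex.I)).im
      = Real.sin α * a + Real.cos α * b := by
    simp [Complex.mul_im, Complex.exp_ofReal_mul_I_re, Complex.exp_ofReal_mul_I_im]; ring
  rw [hre, him]

set_option maxHeartbeats 1000000 in
lemma core (c s : ℝ) (hcs : c ^ 2 + s ^ 2 = 1) (p q H : ℤ)
    (hz : ¬ (p = 0 ∧ q = 0))
    (hH : c * p - s * q = (H : ℝ) / 2) (hodd : H % 2 = 1)
    (hmin : ∀ a b : ℤ, ¬ (a = 0 ∧ b = 0) →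
      (IsHalf (c * a - s * b) ∨ IsHalf (s * a + c * b)) → p ^ 2 + q ^ 2 ≤ a ^ 2 + b ^ 2)
    (a b : ℤ) (hL : IsHalf (c * a - s * b)) :
    ∃ r : ℤ, r % 2 = 1 ∧ a = r * p ∧ b = r * q := by
  obtain ⟨N, hNdef⟩ : ∃ N : ℤ, N = p ^ 2 + q ^ 2 := ⟨_, rfl⟩
  have hN : 0 < N := by
    rcases not_and_or.mp hz with h | h
    · have : 0 < p ^ 2 := by positivity
      nlinarith [sq_nonneg q]
    · have : 0 < q ^ 2 := by positivity
      nlinarith [sq_nonneg p]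
  have hNcast : ((N : ℝ)) = (p : ℝ) ^ 2 + (q : ℝ) ^ 2 := by rw [hNdef]; push_cast; ring
  obtain ⟨t, htdef⟩ : ∃ t : ℝ, t = s * p + c * q := ⟨_, rfl⟩
  have h2 : ((H : ℝ) / 2) ^ 2 + t ^ 2 = (p : ℝ) ^ 2 + (q : ℝ) ^ 2 := by
    rw [← hH, htdef]
    linear_combination ((p : ℝ) ^ 2 + (q : ℝ) ^ 2) * hcs
  have hsum : ((H : ℝ)) ^ 2 + (2 * t) ^ 2 = 4 * N := by
    rw [hNcast]; linear_combination 4 * h2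
  -- key rationality fact
  have hkey : ∀ Y g : ℤ, 2 * t * (Y : ℝ) = (g : ℝ) → Y = 0 := by
    intro Y g hg
    by_contra hY
    have hYR : (Y : ℝ) ≠ 0 := Int.cast_ne_zero.mpr hY
    have h2t : (2 * t) = ((g : ℚ) / (Y : ℚ) : ℚ) := by
      push_cast
      field_simp
      linarith [hg]
    have hnotirr : ¬ Irrational (2 * t) := by
      rw [h2t]; exact Rat.not_irrational _
    have hex : ∃ y : ℤ, (2 * t) = y := by
      by_contra hne
      exact hnotirr (irrational_nrt_of_notint_nrt 2 (4 * N - H ^ 2)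
        (by push_cast; linear_combination hsum) hne (by norm_num))
    obtain ⟨y, hy⟩ := hex
    have hy2 : (y : ℝ) ^ 2 = ((4 * N - H ^ 2 : ℤ) : ℝ) := by
      rw [← hy]; push_cast; linear_combination hsum
    have hy2' : y ^ 2 = 4 * N - H ^ 2 := by exact_mod_cast hy2
    obtain ⟨m, hm⟩ : ∃ m, H = 2 * m + 1 := ⟨(H - 1) / 2, by omega⟩
    rcases Int.even_or_odd y with ⟨u, hu⟩ | ⟨u, hu⟩
    · have h4 : (4 : ℤ) ∣ 1 := ⟨N - u ^ 2 - m ^ 2 - m, by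
        rw [hm, hu] at hy2'; linear_combination hy2'⟩
      norm_num at h4
    · have h4 : (4 : ℤ) ∣ 2 := ⟨N - u ^ 2 - u - m ^ 2 - m, by
        rw [hm, hu] at hy2'; linear_combination hy2'⟩
      norm_num at h4
  obtain ⟨m', hm'⟩ := hL
  obtain ⟨X, hX⟩ : ∃ X : ℤ, X = p * a + q * b := ⟨_, rfl⟩
  obtain ⟨Y, hYdef⟩ : ∃ Y : ℤ, Y = q * a - p * b := ⟨_, rfl⟩
  have hid : (N : ℝ) * (c * a - s * b) = (c * p - s * q) * X + t * Y := by
    rw [htdef, hNcast, hX, hYdef]; push_cast; ring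
  rw [hm', hH] at hid
  have htY : 2 * t * (Y : ℝ) = ((2 * N * m' + N - H * X : ℤ) : ℝ) := by
    push_cast
    linear_combination (-2 : ℝ) * hid
  have hY0 : Y = 0 := hkey Y _ htY
  have hHX : H * X = N * (2 * m' + 1) := by
    rw [hY0] at htY
    have : ((2 * N * m' + N - H * X : ℤ) : ℝ) = 0 := by
      rw [← htY]; push_cast; ring
    have h0 : 2 * N * m' + N - H * X = 0 := by exact_mod_cast this
    linear_combination -h0
  rw [hYdef] at hY0
  have hNa : N * a = p * X := by rw [hNdef, hX]; linear_combination q * hY0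
  have hNb : N * b = q * X := by rw [hNdef, hX]; linear_combination (-p) * hY0
  -- shift to fundamental window
  obtain ⟨k, hk⟩ : ∃ k : ℤ, k = (X + N) / (2 * N) := ⟨_, rfl⟩
  have hdiv : 2 * N * k + (X + N) % (2 * N) = X + N := by
    rw [hk]; exact Int.mul_ediv_add_emod _ _
  have hρ0 : 0 ≤ (X + N) % (2 * N) := Int.emod_nonneg _ (by omega)
  have hρ2 : (X + N) % (2 * N) < 2 * N := Int.emod_lt_of_pos _ (by omega)
  obtain ⟨X', hX'⟩ : ∃ v : ℤ, v = X - 2 * N * k := ⟨_, rfl⟩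
  have hb1 : -N ≤ X' := by rw [hX']; linarith
  have hb2 : X' < N := by rw [hX']; linarith
  obtain ⟨a', ha'⟩ : ∃ v : ℤ, v = a - 2 * k * p := ⟨_, rfl⟩
  obtain ⟨b', hb'⟩ : ∃ v : ℤ, v = b - 2 * k * q := ⟨_, rfl⟩
  have hNa' : N * a' = p * X' := by
    rw [ha', hX']; linear_combination hNa
  have hNb' : N * b' = q * X' := by
    rw [hb', hX']; linear_combination hNb
  have hHX' : H * X' = N * (2 * (m' - k * H) + 1) := by
    rw [hX']; linear_combination hHX
  have hX'ne : X' ≠ 0 := by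
    intro h0
    rw [h0, mul_zero] at hHX'
    rcases mul_eq_zero.mp hHX'.symm with h | h
    · omega
    · omega
  have hab'ne : ¬ (a' = 0 ∧ b' = 0) := by
    rintro ⟨h1, h2⟩
    rw [h1, mul_zero] at hNa'
    rw [h2, mul_zero] at hNb'
    exact hz ⟨by rcases mul_eq_zero.mp hNa'.symm with h | h; exacts [h, absurd h hX'ne],
      by rcases mul_eq_zero.mp hNb'.symm with h | h; exacts [h, absurd h hX'ne]⟩
  have e1 : p * a' + q * b' = X' := by
    rw [ha', hb', hX']; linear_combination 2 * k * hNdef - hX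
  have e2 : q * a' - p * b' = 0 := by
    rw [ha', hb']; linear_combination hY0
  have e1R : ((X' : ℝ)) = (p : ℝ) * a' + q * b' := by exact_mod_cast congrArg (Int.cast : ℤ → ℝ) e1.symm
  have e2R : (q : ℝ) * a' - p * b' = 0 := by exact_mod_cast congrArg (Int.cast : ℤ → ℝ) e2
  have hNR : ((N : ℝ)) ≠ 0 := by exact_mod_cast (by omega : N ≠ 0)
  have hhalf' : IsHalf (c * a' - s * b') := by
    refine ⟨m' - k * H, ?_⟩
    have hid' : (N : ℝ) * (c * a' - s * b') = (c * p - s * q) * X' := by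
      rw [hNcast]
      linear_combination -(c * (p : ℝ) - s * q) * e1R + (s * (p : ℝ) + c * q) * e2R
    have hHX'R : (H : ℝ) * X' = (N : ℝ) * (2 * ((m' : ℝ) - k * H) + 1) := by
      exact_mod_cast congrArg (Int.cast : ℤ → ℝ) hHX'
    have hfin : (N : ℝ) * (c * a' - s * b') = (N : ℝ) * (((m' - k * H : ℤ) : ℝ) + 1 / 2) := by
      rw [hid', hH]
      push_cast
      linear_combination (1 / 2 : ℝ) * hHX'R
    exact mul_left_cancel₀ hNR hfin
  have hminr : N ≤ a' ^ 2 + b' ^ 2 := by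
    rw [hNdef]; exact hmin a' b' hab'ne (Or.inl hhalf')
  have hsq2 : N * (N * (a' ^ 2 + b' ^ 2)) = N * (X' ^ 2) := by
    linear_combination (N * a' + p * X') * hNa' + (N * b' + q * X') * hNb' - X' ^ 2 * hNdef
  have hsq : N * (a' ^ 2 + b' ^ 2) = X' ^ 2 := mul_left_cancel₀ (by omega) hsq2
  have hX'big : N ^ 2 ≤ X' ^ 2 := by nlinarith
  have h5 : (X' + N) * (X' - N) ≥ 0 := by nlinarith
  have h7 : X' + N ≤ 0 := by nlinarith
  have hXN : X' = -N := by linarith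
  have hXval : X = N * (2 * k - 1) := by linear_combination hXN - hX'
  have ha : a = (2 * k - 1) * p := by
    have h8 : N * a = N * ((2 * k - 1) * p) := by linear_combination hNa + p * hXval
    exact mul_left_cancel₀ (by omega) h8
  have hb : b = (2 * k - 1) * q := by
    have h8 : N * b = N * ((2 * k - 1) * q) := by linear_combination hNb + q * hXval
    exact mul_left_cancel₀ (by omega) h8
  exact ⟨2 * k - 1, by omega, ha, hb⟩

lemma pack (x y : ℂ) (r : ℤ) (hro : r % 2 = 1) (e : ℕ) (he : e ≤ 1)
    (hx : x = (r : ℂ) * Complex.I ^ e * y) :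
    ∃ Q l : ℕ, Q ≤ 3 ∧ x = (2 * (l : ℂ) + 1) * Complex.I ^ Q * y := by
  rcases lt_or_ge 0 r with hr | hr
  · refine ⟨e, ((r - 1) / 2).toNat, by omega, ?_⟩
    have hr' : r = 2 * (((r - 1) / 2).toNat : ℤ) + 1 := by omega
    have hC : (r : ℂ) = 2 * ((((r - 1) / 2).toNat : ℕ) : ℂ) + 1 := by
      exact_mod_cast congrArg (fun z : ℤ => (z : ℂ)) hr'
    rw [hx, hC]
  · have hrneg : r < 0 := by omega
    refine ⟨e + 2, ((-r - 1) / 2).toNat, by omega, ?_⟩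
    have hr' : r = -(2 * (((-r - 1) / 2).toNat : ℤ) + 1) := by omega
    have hC : (r : ℂ) = -(2 * ((((-r - 1) / 2).toNat : ℕ) : ℂ) + 1) := by
      exact_mod_cast congrArg (fun z : ℤ => (z : ℂ)) hr'
    rw [hx, hC, pow_add, Complex.I_sq]
    ring

lemma Ipow_bump (Q : ℕ) (hQ : Q ≤ 3) :
    ∃ Q' : ℕ, Q' ≤ 3 ∧ Complex.I ^ (Q + 1) = Complex.I ^ Q' := by
  interval_cases Q
  · exact ⟨1, by norm_num, rfl⟩
  · exact ⟨2, by norm_num, rfl⟩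
  · exact ⟨3, by norm_num, rfl⟩
  · exact ⟨0, by norm_num, by
      linear_combination (Complex.I ^ 2 - 1) * Complex.I_sq⟩

lemma middle (c s : ℝ) (hcs : c ^ 2 + s ^ 2 = 1) (p q H : ℤ)
    (hz : ¬ (p = 0 ∧ q = 0))
    (hH : c * p - s * q = (H : ℝ) / 2) (hodd : H % 2 = 1)
    (hmin : ∀ a b : ℤ, ¬ (a = 0 ∧ b = 0) →
      (IsHalf (c * a - s * b) ∨ IsHalf (s * a + c * b)) → p ^ 2 + q ^ 2 ≤ a ^ 2 + b ^ 2)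
    (a b : ℤ)
    (hab : IsHalf (c * a - s * b) ∨ IsHalf (s * a + c * b)) :
    ∃ Q l : ℕ, Q ≤ 3 ∧
      (a : ℂ) + (b : ℂ) * Complex.I =
        (2 * (l : ℂ) + 1) * Complex.I ^ Q * ((p : ℂ) + (q : ℂ) * Complex.I) := by
  rcases hab with h | h
  · obtain ⟨r, hro, ha, hb⟩ := core c s hcs p q H hz hH hodd hmin a b h
    refine pack _ _ r hro 0 (by norm_num) ?_
    subst ha; subst hb
    push_cast
    ring
  · have hcomm : c * (b : ℝ) - s * ((-a : ℤ) : ℝ) = s * a + c * b := by push_cast; ring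
    obtain ⟨r, hro, hb, hna⟩ := core c s hcs p q H hz hH hodd hmin b (-a)
      (by rw [hcomm]; exact h)
    refine pack _ _ r hro 1 (by norm_num) ?_
    have ha : a = -(r * q) := by omega
    subst ha; subst hb
    push_cast
    linear_combination (-(r : ℂ) * q) * Complex.I_sq

/-- the set of source points of a hinge angle is the union of the
four rays of odd multiples of i^Q times the primary source point z₀ = p+qi. -/
theorem source_points_rays (α : ℝ) (p q : ℤ) (hz : ¬ (p = 0 ∧ q = 0))
    (hsrc : InH (Complex.exp (α * Complex.I) * ((p : ℂ) + (q : ℂ) * Complex.I)))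
    (hmin : ∀ a b : ℤ, ¬ (a = 0 ∧ b = 0) →
      InH (Complex.exp (α * Complex.I) * ((a : ℂ) + (b : ℂ) * Complex.I)) →
      p ^ 2 + q ^ 2 ≤ a ^ 2 + b ^ 2) :
    ∀ a b : ℤ,
      InH (Complex.exp (α * Complex.I) * ((a : ℂ) + (b : ℂ) * Complex.I)) ↔
      ∃ Q l : ℕ, Q ≤ 3 ∧
        (a : ℂ) + (b : ℂ) * Complex.I =
          (2 * (l : ℂ) + 1) * Complex.I ^ Q * ((p : ℂ) + (q : ℂ) * Complex.I) := by
  intro a b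
  have hsrcC := hsrc
  have hcs : Real.cos α ^ 2 + Real.sin α ^ 2 = 1 := by
    have := Real.sin_sq_add_cos_sq α; linarith
  rw [inH_iff] at hsrc
  simp only [inH_iff] at hmin
  constructor
  · intro hab
    rw [inH_iff] at hab
    rcases hsrc with hs1 | hs2
    · obtain ⟨n, hn⟩ := hs1
      have hH : Real.cos α * p - Real.sin α * q = ((2 * n + 1 : ℤ) : ℝ) / 2 := by
        rw [hn]; push_cast; ring
      exact middle _ _ hcs p q (2 * n + 1) hz hH (by omega) hmin a b hab
    · obtain ⟨n, hn⟩ := hs2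
      have hz₂ : ¬ ((-q : ℤ) = 0 ∧ p = 0) := by omega
      have hH₂ : Real.cos α * ((-q : ℤ) : ℝ) - Real.sin α * (p : ℝ)
          = ((-(2 * n + 1) : ℤ) : ℝ) / 2 := by
        push_cast
        linarith [hn]
      have hmin₂ : ∀ a b : ℤ, ¬ (a = 0 ∧ b = 0) →
          (IsHalf (Real.cos α * a - Real.sin α * b) ∨
            IsHalf (Real.sin α * a + Real.cos α * b)) →
          (-q) ^ 2 + p ^ 2 ≤ a ^ 2 + b ^ 2 := by
        intro a' b' h1 h2
        have := hmin a' b' h1 h2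
        have he : (-q : ℤ) ^ 2 + p ^ 2 = p ^ 2 + q ^ 2 := by ring
        omega
      obtain ⟨Q, l, hQ, heq⟩ := middle _ _ hcs (-q) p (-(2 * n + 1)) hz₂ hH₂
        (by omega) hmin₂ a b hab
      obtain ⟨Q', hQ', hpow⟩ := Ipow_bump Q hQ
      refine ⟨Q', l, hQ', ?_⟩
      rw [heq, ← hpow, pow_succ]
      push_cast
      linear_combination (-(2 * (l : ℂ) + 1) * Complex.I ^ Q * q) * Complex.I_sq
  · rintro ⟨Q, l, hQ, heq⟩
    have hrw : Complex.exp (α * Complex.I) * ((a : ℂ) + (b : ℂ) * Complex.I)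
        = (2 * (l : ℂ) + 1) *
          (Complex.I ^ Q * (Complex.exp (α * Complex.I) * ((p : ℂ) + (q : ℂ) * Complex.I))) := by
      rw [heq]; ring
    rw [hrw]
    exact inH_odd l (inH_Ipow Q hsrcC)
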